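/- arXiv:2203.02509 — 3 statements merged into one kernel-verified Lean document; each statement's English description precedes it below -/
import Mathlib

section
/- Let a ∈ (0,1], λ ∈ [0,1), and s ∈ ℂ with Re(s) > 1. Then the Lerch zeta function satisfies the integral representation Σ_{n=0}^∞ e^{2πiλn}(n+a)^{-s} = a^{-s} + ((2π)^s / Γ(s)) · ∫_0^∞ z^{s-1} e^{-2πaz} / (e^{2πz - 2πiλ} − 1) dz, where the integral is over the positive real axis and z^{s-1} is the real power z ↦ exp((s−1)·log z). -/
open Real Set
open Complex (I)

/-- **Integral representation of the Lerch zeta function.**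
For `a ∈ (0,1]`, `λ ∈ [0,1)` and `Re s > 1`,
`Σ_{n=0}^∞ e^{2πiλn}(n+a)^{-s}
  = a^{-s} + ((2π)^s / Γ(s)) ∫_0^∞ z^{s-1} e^{-2πaz} / (e^{2πz-2πiλ} - 1) dz`. -/
theorem lerch_zeta_integral_representation (a lam : ℝ) (ha : a ∈ Ioc (0:ℝ) 1)
    (hlam : lam ∈ Ico (0:ℝ) 1) (s : ℂ) (hs : 1 < s.re) :
    ∑' n : ℕ, Complex.exp (2 * (π : ℂ) * I * (lam : ℂ) * (n : ℂ)) * ((n : ℂ) + (a : ℂ)) ^ (-s)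
      = (a : ℂ) ^ (-s) + (2 * (π : ℂ)) ^ s / Complex.Gamma s *
          ∫ z in Ioi (0 : ℝ),
            (z : ℂ) ^ (s - 1) * Complex.exp (-(2 * (π : ℂ) * (a : ℂ) * (z : ℂ))) /
              (Complex.exp (2 * (π : ℂ) * (z : ℂ) - 2 * (π : ℂ) * I * (lam : ℂ)) - 1) := by
  obtain ⟨ha0, _⟩ := ha
  have hσ : 0 < s.re := by linarith
  have hΓ : Complex.Gamma s ≠ 0 := Complex.Gamma_ne_zero_of_re_pos hσ
  set c : ℕ → ℂ := fun n => Complex.exp (2 * (π : ℂ) * I * (lam : ℂ) * ((n : ℂ) + 1)) with hc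
  set p : ℕ → ℝ := fun n => 2 * π * ((n : ℝ) + 1 + a) with hpdef
  set F : ℝ → ℂ := fun t => Complex.exp (-(2 * (π : ℂ) * (a : ℂ) * (t : ℂ))) /
      (Complex.exp (2 * (π : ℂ) * (t : ℂ) - 2 * (π : ℂ) * I * (lam : ℂ)) - 1) with hFdef
  have hppos : ∀ n, 0 < p n := fun n => by
    have : (0:ℝ) < (n : ℝ) + 1 + a := by positivity
    simp only [hpdef]
    positivity
  have hcn : ∀ n, ‖c n‖ = 1 := by
    intro n
    have h1 : (2 * (π : ℂ) * I * (lam : ℂ) * ((n : ℂ) + 1))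
        = ((2 * π * lam * ((n : ℝ) + 1) : ℝ) : ℂ) * I := by push_cast; ring
    show ‖Complex.exp (2 * (π : ℂ) * I * (lam : ℂ) * ((n : ℂ) + 1))‖ = 1
    rw [h1, Complex.norm_exp_ofReal_mul_I]
  -- the series defining F
  have hFsum : ∀ t ∈ Ioi (0:ℝ), HasSum (fun n => c n * rexp (-p n * t)) (F t) := by
    intro t ht
    rw [mem_Ioi] at ht
    set w : ℂ := 2 * (π : ℂ) * (t : ℂ) - 2 * (π : ℂ) * I * (lam : ℂ) with hw
    have hwre : w.re = 2 * π * t := by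
      simp [hw, Complex.sub_re, Complex.mul_re, Complex.I_re, Complex.I_im]
    have hr : ‖Complex.exp (-w)‖ < 1 := by
      rw [Complex.norm_exp, Complex.neg_re, hwre]
      rw [Real.exp_lt_one_iff]
      have := pi_pos
      nlinarith
    have hE1 : Complex.exp w ≠ 1 := by
      intro h
      rw [Complex.exp_neg, h] at hr
      simp at hr
    have hE1' : Complex.exp w - 1 ≠ 0 := sub_ne_zero.mpr hE1
    have geo := (hasSum_geometric_of_norm_lt_one hr).mul_left
      (Complex.exp (-(2 * (π : ℂ) * (a : ℂ) * (t : ℂ))) * Complex.exp (-w))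
    convert geo using 2 with n
    · rfl
    · -- termwise
      rw [← Complex.exp_nat_mul, ← Complex.exp_add, ← Complex.exp_add]
      rw [Complex.ofReal_exp]
      rw [← Complex.exp_add]
      congr 1
      simp only [hpdef, hw]
      push_cast
      ring
    · -- sum value
      have hE0 : Complex.exp w ≠ 0 := Complex.exp_ne_zero w
      have hgeo : Complex.exp (-w) * (1 - Complex.exp (-w))⁻¹ = (Complex.exp w - 1)⁻¹ := by
        have h4 : (1 - (Complex.exp w)⁻¹) = (Complex.exp w - 1) * (Complex.exp w)⁻¹ := by
          field_simp
        rw [Complex.exp_neg, h4, mul_inv, inv_inv]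
        calc (Complex.exp w)⁻¹ * ((Complex.exp w - 1)⁻¹ * Complex.exp w)
            = (Complex.exp w)⁻¹ * Complex.exp w * (Complex.exp w - 1)⁻¹ := by ring
          _ = (Complex.exp w - 1)⁻¹ := by rw [inv_mul_cancel₀ hE0, one_mul]
      simp only [hFdef]
      rw [mul_assoc _ (Complex.exp (-w)) _, hgeo, ← div_eq_mul_inv]
  -- summability of the coefficients
  have hsum : Summable fun n => ‖c n‖ / p n ^ s.re := by
    have hmaj : Summable fun n : ℕ => 1 / ((n : ℝ) + 1) ^ s.re := by
      have h0 := (Real.summable_one_div_nat_rpow (p := s.re)).mpr hs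
      have h1 := h0.comp_injective Nat.succ_injective
      refine h1.congr fun n => ?_
      simp only [Function.comp_apply, Nat.succ_eq_add_one, Nat.cast_add, Nat.cast_one]
    apply Summable.of_nonneg_of_le (fun n => by positivity) _ hmaj
    intro n
    rw [hcn n]
    apply one_div_le_one_div_of_le (by positivity)
    apply Real.rpow_le_rpow (by positivity) _ hσ.le
    simp only [hpdef]
    nlinarith [pi_gt_three, Nat.cast_nonneg (α := ℝ) n]
  have key := hasSum_mellin (fun n => Or.inr (hppos n)) hσ hFsum hsum
  -- identify the mellin integral with the goal's integral
  have hmel : mellin F s = ∫ z in Ioi (0 : ℝ),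
      (z : ℂ) ^ (s - 1) * Complex.exp (-(2 * (π : ℂ) * (a : ℂ) * (z : ℂ))) /
        (Complex.exp (2 * (π : ℂ) * (z : ℂ) - 2 * (π : ℂ) * I * (lam : ℂ)) - 1) := by
    rw [mellin]
    refine MeasureTheory.setIntegral_congr_fun measurableSet_Ioi (fun t _ => ?_)
    simp [hFdef, smul_eq_mul, mul_div_assoc]
  -- multiply by (2π)^s / Γ s
  have h2π : ((2 * π : ℝ) : ℂ) ^ s ≠ 0 := by
    rw [Ne, Complex.cpow_eq_zero_iff]
    simp [Real.pi_ne_zero, two_pi_pos.ne']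
  have hgen : ∀ P G C B : ℂ, P ≠ 0 → G ≠ 0 → B ≠ 0 →
      P / G * (G * C / (P * B)) = C * B⁻¹ := by
    intro P G C B hP hG hB
    have h : P / G * (G * C / (P * B)) = P / P * (G / G) * (C / B) := by ring
    rw [h, div_self hP, div_self hG, one_mul, one_mul, div_eq_mul_inv]
  have key2 : HasSum
      (fun n : ℕ => Complex.exp (2 * (π : ℂ) * I * (lam : ℂ) * ((n : ℂ) + 1)) *
        (((n : ℂ) + 1) + (a : ℂ)) ^ (-s))
      ((2 * (π : ℂ)) ^ s / Complex.Gamma s * mellin F s) := by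
    have hmul := key.mul_left ((2 * (π : ℂ)) ^ s / Complex.Gamma s)
    convert hmul using 2 with n
    · rfl
    have hcast : ((p n : ℝ) : ℂ) = ((2 * π : ℝ) : ℂ) * (((n : ℝ) + 1 + a : ℝ) : ℂ) := by
      simp only [hpdef]; push_cast; ring
    have hsplit : ((p n : ℝ) : ℂ) ^ s
        = ((2 * π : ℝ) : ℂ) ^ s * (((n : ℝ) + 1 + a : ℝ) : ℂ) ^ s := by
      rw [hcast, ← Complex.mul_cpow_ofReal_nonneg two_pi_pos.le (by positivity)]
    have hbne : (((n : ℝ) + 1 + a : ℝ) : ℂ) ≠ 0 := by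
      rw [Ne, Complex.ofReal_eq_zero]
      have : (0:ℝ) < (n : ℝ) + 1 + a := by positivity
      exact this.ne'
    have hb0 : (((n : ℝ) + 1 + a : ℝ) : ℂ) ^ s ≠ 0 := by
      intro h
      exact hbne ((Complex.cpow_eq_zero_iff _ _).mp h).1
    have hbase : (((n : ℂ) + 1) + (a : ℂ)) = (((n : ℝ) + 1 + a : ℝ) : ℂ) := by push_cast; ring
    have h2π' : (2 * (π : ℂ)) ^ s = ((2 * π : ℝ) : ℂ) ^ s := by norm_num
    rw [hbase, Complex.cpow_neg, hsplit, h2π']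
    exact (hgen _ _ _ _ h2π hΓ hb0).symm
  -- assemble
  set f : ℕ → ℂ := fun n : ℕ =>
    Complex.exp (2 * (π : ℂ) * I * (lam : ℂ) * (n : ℂ)) * ((n : ℂ) + (a : ℂ)) ^ (-s) with hfdef
  have key3 : HasSum (fun n => f (n + 1))
      ((2 * (π : ℂ)) ^ s / Complex.Gamma s * mellin F s) := by
    have hfe : (fun n : ℕ => f (n + 1))
        = fun n : ℕ => Complex.exp (2 * (π : ℂ) * I * (lam : ℂ) * ((n : ℂ) + 1)) *
            (((n : ℂ) + 1) + (a : ℂ)) ^ (-s) := by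
      funext n
      have e1 : ((n + 1 : ℕ) : ℂ) = (n : ℂ) + 1 := by push_cast; ring
      simp only [hfdef, e1]
    rw [hfe]
    exact key2
  have hfull := (hasSum_nat_add_iff (f := f) 1).mp key3
  rw [hfull.tsum_eq, hmel]
  have hf0 : ∑ i ∈ Finset.range 1, f i = (a : ℂ) ^ (-s) := by
    simp [hfdef]
  rw [hf0]
  ring
end

section
/- Let a ∈ (0,1], λ ∈ (0,1), and s ∈ ℂ with Re(s) > 0. Then ∫_0^∞ z^{s-1} e^{-2πaz} / (e^{2πz - 2πiλ} − 1) dz = e^{-iπs/4} ∫_0^∞ u^{s-1} e^{-2πa e^{-iπ/4} u} / (e^{2π e^{-iπ/4} u - 2πiλ} − 1) du, i.e. the contour of integration (0,∞) may be rotated to the ray (0, ∞e^{-iπ/4}) without changing the value of the integral. -/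
open Real Set
open Complex (I)

section LerchAuxiliary

open MeasureTheory Filter
open scoped Interval

noncomputable section


/-- The closed sector `{z : arg z ∈ [-π/4, 0]} ∪ {0}`. -/
def lerchS : Set ℂ := {z : ℂ | 0 ≤ z.re ∧ -z.re ≤ z.im ∧ z.im ≤ 0}

lemma lerchS_closed : IsClosed lerchS := by
  have h1 : IsClosed {z : ℂ | 0 ≤ z.re} :=
    isClosed_le continuous_const Complex.continuous_re
  have h2 : IsClosed {z : ℂ | -z.re ≤ z.im} :=
    isClosed_le (Complex.continuous_re.neg) Complex.continuous_im
  have h3 : IsClosed {z : ℂ | z.im ≤ 0} :=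
    isClosed_le Complex.continuous_im continuous_const
  have : lerchS = ({z : ℂ | 0 ≤ z.re} ∩ {z | -z.re ≤ z.im}) ∩ {z | z.im ≤ 0} := by
    ext z; simp [lerchS, Set.mem_inter_iff, and_assoc]
  rw [this]; exact (h1.inter h2).inter h3

lemma lerchD_ne_zero (lam : ℝ) (hlam : lam ∈ Ioo (0:ℝ) 1) {z : ℂ} (hz : z ∈ lerchS) :
    Complex.exp (2 * (π : ℂ) * z - 2 * (π : ℂ) * I * (lam : ℂ)) - 1 ≠ 0 := by
  intro h
  rw [sub_eq_zero] at h
  have habs : Real.exp ((2 * (π : ℂ) * z - 2 * (π : ℂ) * I * (lam : ℂ)).re) = 1 := by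
    rw [← Complex.norm_exp, h, norm_one]
  have hre : (2 * (π : ℂ) * z - 2 * (π : ℂ) * I * (lam : ℂ)).re = 2 * π * z.re := by
    simp [Complex.sub_re, Complex.mul_re, Complex.mul_im]
  rw [hre, Real.exp_eq_one_iff] at habs
  have hzre : z.re = 0 := by
    have := Real.pi_pos
    nlinarith [habs]
  have hzim : z.im = 0 := le_antisymm hz.2.2 (by simpa [hzre] using hz.2.1)
  have hz0 : z = 0 := Complex.ext hzre hzim
  rw [hz0, mul_zero, zero_sub, Complex.exp_eq_one_iff] at h
  obtain ⟨n, hn⟩ := h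
  have : -(lam : ℂ) = (n : ℂ) := by
    have h2 : (2 * ↑π * I : ℂ) ≠ 0 := by
      simp [Complex.I_ne_zero, Real.pi_ne_zero]
    apply mul_right_cancel₀ h2
    rw [show -(lam:ℂ) * (2 * ↑π * I) = -(2 * ↑π * I * ↑lam) by ring, hn]
  have : -(lam : ℝ) = (n : ℝ) := by exact_mod_cast this
  have h1 : (0:ℝ) < lam := hlam.1
  have h2 : lam < 1 := hlam.2
  rcases le_or_gt (0:ℤ) n with hn0 | hn0
  · have : (0:ℝ) ≤ (n:ℝ) := by exact_mod_cast hn0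
    linarith
  · have hn1 : n ≤ -1 := by omega
    have : (n:ℝ) ≤ -1 := by exact_mod_cast hn1
    linarith


lemma lerch_re_aux (z : ℂ) : (2 * (π : ℂ) * z - 2 * (π : ℂ) * I * (lam : ℝ)).re
    = 2 * π * z.re := by
  simp [Complex.sub_re, Complex.mul_re, Complex.mul_im]

lemma lerchD_lower (lam : ℝ) (hlam : lam ∈ Ioo (0:ℝ) 1) :
    ∃ m > 0, ∀ z ∈ lerchS, z.re ≤ 1 →
      m ≤ ‖Complex.exp (2 * (π : ℂ) * z - 2 * (π : ℂ) * I * (lam : ℂ)) - 1‖ := by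
  set D : ℂ → ℂ := fun z => Complex.exp (2 * (π : ℂ) * z - 2 * (π : ℂ) * I * (lam : ℂ)) - 1
  have hDcont : Continuous D := by
    apply Continuous.sub _ continuous_const
    exact Complex.continuous_exp.comp (by continuity)
  set K : Set ℂ := lerchS ∩ {z | z.re ≤ 1}
  have hKclosed : IsClosed K :=
    lerchS_closed.inter (isClosed_le Complex.continuous_re continuous_const)
  have hKbdd : Bornology.IsBounded K := by
    apply Bornology.IsBounded.subset (Metric.isBounded_closedBall (x := (0:ℂ)) (r := 2))
    intro z hz
    obtain ⟨⟨h1, h2, h3⟩, h4⟩ := hz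
    simp only [Set.mem_setOf_eq] at h4
    simp only [Metric.mem_closedBall, Complex.dist_eq, sub_zero]
    calc ‖z‖ ≤ |z.re| + |z.im| := Complex.norm_le_abs_re_add_abs_im z
      _ ≤ 1 + 1 := by
          have : |z.re| ≤ 1 := abs_le.mpr ⟨by linarith, h4⟩
          have : |z.im| ≤ 1 := abs_le.mpr ⟨by linarith, by linarith⟩
          linarith
      _ = 2 := by norm_num
  have hK : IsCompact K := Metric.isCompact_of_isClosed_isBounded hKclosed hKbdd
  have h0K : (0:ℂ) ∈ K := by
    constructor
    · exact ⟨le_refl _, by simp, by simp⟩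
    · simp
  obtain ⟨z₀, hz₀K, hz₀min⟩ := hK.exists_isMinOn ⟨0, h0K⟩ (hDcont.norm.continuousOn)
  refine ⟨‖D z₀‖, ?_, fun z hz hzre => hz₀min ⟨hz, hzre⟩⟩
  exact norm_pos_iff.mpr (lerchD_ne_zero lam hlam hz₀K.1)



lemma lerchF_bound (a lam : ℝ) (ha : a ∈ Ioc (0:ℝ) 1) (hlam : lam ∈ Ioo (0:ℝ) 1) :
    ∃ M > 0, ∀ z ∈ lerchS,
      ‖Complex.exp (-(2 * (π : ℂ) * (a : ℂ) * z)) /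
        (Complex.exp (2 * (π : ℂ) * z - 2 * (π : ℂ) * I * (lam : ℂ)) - 1)‖
        ≤ M * Real.exp (-(2 * π * z.re)) := by
  obtain ⟨m, hm, hmle⟩ := lerchD_lower lam hlam
  have hM1 : (0:ℝ) < Real.exp (2*π) / m := by positivity
  refine ⟨max (Real.exp (2*π) / m) 2, lt_of_lt_of_le hM1 (le_max_left _ _), ?_⟩
  intro z hz
  have hzre : 0 ≤ z.re := hz.1
  have hnumre : (-(2 * (π : ℂ) * (a : ℂ) * z)).re = -(2 * π * a * z.re) := by
    simp [Complex.mul_re, Complex.mul_im]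
  have hnum : ‖Complex.exp (-(2 * (π : ℂ) * (a : ℂ) * z))‖ ≤ 1 := by
    rw [Complex.norm_exp, hnumre]
    apply Real.exp_le_one_iff.mpr
    have h1 := Real.pi_pos
    have h2 := ha.1
    nlinarith [mul_nonneg (mul_nonneg (by linarith : (0:ℝ) ≤ 2*π) h2.le) hzre]
  rw [norm_div]
  have hden0 : (0:ℝ) < ‖Complex.exp (2 * (π : ℂ) * z - 2 * (π : ℂ) * I * (lam : ℂ)) - 1‖ :=
    norm_pos_iff.mpr (lerchD_ne_zero lam hlam hz)
  rcases le_or_gt z.re 1 with h | h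
  · have hd : m ≤ ‖Complex.exp (2 * (π : ℂ) * z - 2 * (π : ℂ) * I * (lam : ℂ)) - 1‖ :=
      hmle z hz h
    calc _ ≤ 1 / m := div_le_div₀ zero_le_one hnum hm hd
      _ = (Real.exp (2*π) / m) * Real.exp (-(2*π)) := by
          rw [div_mul_eq_mul_div, ← Real.exp_add]
          simp
      _ ≤ (Real.exp (2*π) / m) * Real.exp (-(2*π*z.re)) := by
          apply mul_le_mul_of_nonneg_left _ hM1.le
          apply Real.exp_le_exp.mpr
          have := Real.pi_pos
          nlinarith
      _ ≤ max (Real.exp (2*π) / m) 2 * Real.exp (-(2*π*z.re)) := by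
          gcongr
          exact le_max_left _ _
  · have h1 : ‖Complex.exp (2 * (π : ℂ) * z - 2 * (π : ℂ) * I * (lam : ℂ))‖
        = Real.exp (2*π*z.re) := by
      rw [Complex.norm_exp, lerch_re_aux]
    have hpi3 : (3:ℝ) < π := Real.pi_gt_three
    have h2 : (2:ℝ) ≤ Real.exp (2*π*z.re) := by
      have := Real.add_one_le_exp (2*π*z.re)
      nlinarith
    have hd : Real.exp (2*π*z.re) / 2
        ≤ ‖Complex.exp (2 * (π : ℂ) * z - 2 * (π : ℂ) * I * (lam : ℂ)) - 1‖ := by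
      have h3 := norm_sub_norm_le
        (Complex.exp (2 * (π : ℂ) * z - 2 * (π : ℂ) * I * (lam : ℂ))) 1
      rw [h1] at h3
      simp only [norm_one] at h3
      linarith
    calc _ ≤ 1 / (Real.exp (2*π*z.re) / 2) := by
          apply div_le_div₀ zero_le_one hnum (by positivity) hd
      _ = 2 * Real.exp (-(2*π*z.re)) := by
          rw [Real.exp_neg]
          field_simp
      _ ≤ max (Real.exp (2*π) / m) 2 * Real.exp (-(2*π*z.re)) := by
          gcongr
          exact le_max_right _ _



lemma lerch_exp_mem (x y : ℝ) (hy : y ∈ Icc (-(π/4)) 0) :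
    Complex.exp (x + y*I) ∈ lerchS ∧
      Real.exp x * (Real.sqrt 2 / 2) ≤ (Complex.exp ((x:ℂ) + (y:ℂ)*I)).re := by
  have hre : ((x:ℂ) + (y:ℂ)*I).re = x := by simp
  have him : ((x:ℂ) + (y:ℂ)*I).im = y := by simp
  have hER : (Complex.exp ((x:ℂ) + (y:ℂ)*I)).re = Real.exp x * Real.cos y := by
    rw [Complex.exp_re, hre, him]
  have hEI : (Complex.exp ((x:ℂ) + (y:ℂ)*I)).im = Real.exp x * Real.sin y := by
    rw [Complex.exp_im, hre, him]
  have hpi4 : 0 ≤ π/4 := by positivity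
  have hy1 : -(π/4) ≤ y := hy.1
  have hy2 : y ≤ 0 := hy.2
  have hcos : Real.sqrt 2 / 2 ≤ Real.cos y := by
    rw [← Real.cos_pi_div_four, ← Real.cos_abs y]
    apply Real.cos_le_cos_of_nonneg_of_le_pi (abs_nonneg _)
    · linarith [Real.pi_pos]
    · rw [abs_le]
      constructor <;> linarith
  have hsin0 : Real.sin y ≤ 0 := Real.sin_nonpos_of_nonpos_of_neg_pi_le hy2
    (by linarith [Real.pi_pos])
  have hsincos : -(Real.cos y) ≤ Real.sin y := by
    have h1 : Real.sin (-y) ≤ Real.cos (-y) := by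
      rw [Real.cos_neg]
      have hycos := Real.cos_nonneg_of_mem_Icc (x := y) ⟨by linarith [Real.pi_pos], by linarith⟩
      have : Real.sin (-y) ≤ Real.sin (π/4) := by
        apply Real.sin_le_sin_of_le_of_le_pi_div_two (by linarith [Real.pi_pos])
          (by linarith [Real.pi_pos]) (by linarith)
      rw [Real.sin_pi_div_four] at this
      calc Real.sin (-y) ≤ Real.sqrt 2 / 2 := this
        _ ≤ Real.cos y := hcos
    rw [Real.sin_neg, Real.cos_neg] at h1
    linarith
  have hex : (0:ℝ) < Real.exp x := Real.exp_pos x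
  refine ⟨⟨?_, ?_, ?_⟩, ?_⟩
  · rw [hER]
    have hc0 : 0 ≤ Real.cos y := by
      have := Real.sqrt_nonneg 2
      linarith
    exact mul_nonneg hex.le hc0
  · rw [hER, hEI]
    nlinarith [mul_le_mul_of_nonneg_left hsincos hex.le]
  · rw [hEI]
    exact mul_nonpos_of_nonneg_of_nonpos hex.le hsin0
  · rw [hER]
    exact mul_le_mul_of_nonneg_left hcos hex.le



/-- The integrand after the substitution `z = e^w`. -/
noncomputable def lerchG (a lam : ℝ) (s : ℂ) : ℂ → ℂ := fun w =>
  Complex.exp (s * w) *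
    (Complex.exp (-(2 * (π : ℂ) * (a : ℂ) * Complex.exp w)) /
      (Complex.exp (2 * (π : ℂ) * Complex.exp w - 2 * (π : ℂ) * I * (lam : ℂ)) - 1))

lemma lerchG_bound (a lam : ℝ) (ha : a ∈ Ioc (0:ℝ) 1) (hlam : lam ∈ Ioo (0:ℝ) 1) (s : ℂ) :
    ∃ C > 0, ∀ x y : ℝ, y ∈ Icc (-(π/4)) 0 →
      ‖lerchG a lam s ((x:ℂ) + (y:ℂ)*I)‖
        ≤ C * Real.exp (s.re * x - Real.sqrt 2 * π * Real.exp x) := by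
  obtain ⟨M, hM, hMle⟩ := lerchF_bound a lam ha hlam
  refine ⟨M * Real.exp (π/4 * |s.im|), by positivity, ?_⟩
  intro x y hy
  obtain ⟨hmem, hre⟩ := lerch_exp_mem x y hy
  rw [lerchG, norm_mul]
  have h1 : ‖Complex.exp (s * ((x:ℂ) + (y:ℂ)*I))‖
      ≤ Real.exp (s.re * x + π/4 * |s.im|) := by
    rw [Complex.norm_exp]
    apply Real.exp_le_exp.mpr
    have hre2 : (s * ((x:ℂ) + (y:ℂ)*I)).re = s.re * x - s.im * y := by
      simp [Complex.mul_re]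
    rw [hre2]
    have : -(s.im * y) ≤ |s.im| * (π/4) := by
      calc -(s.im * y) ≤ |s.im * y| := neg_le_abs _
        _ = |s.im| * |y| := abs_mul _ _
        _ ≤ |s.im| * (π/4) := by
            apply mul_le_mul_of_nonneg_left _ (abs_nonneg _)
            rw [abs_le]
            exact ⟨by linarith [hy.1], by linarith [hy.2, Real.pi_pos]⟩
    linarith
  have h2 : ‖Complex.exp (-(2 * (π : ℂ) * (a : ℂ) * Complex.exp ((x:ℂ) + (y:ℂ)*I))) /
      (Complex.exp (2 * (π : ℂ) * Complex.exp ((x:ℂ) + (y:ℂ)*I)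
        - 2 * (π : ℂ) * I * (lam : ℂ)) - 1)‖
      ≤ M * Real.exp (-(Real.sqrt 2 * π * Real.exp x)) := by
    refine (hMle _ hmem).trans ?_
    apply mul_le_mul_of_nonneg_left _ hM.le
    apply Real.exp_le_exp.mpr
    have h2' : Real.sqrt 2 * π * Real.exp x ≤ 2 * π * (Complex.exp ((x:ℂ) + (y:ℂ)*I)).re := by
      calc Real.sqrt 2 * π * Real.exp x = 2 * π * (Real.exp x * (Real.sqrt 2 / 2)) := by ring
        _ ≤ 2 * π * (Complex.exp ((x:ℂ) + (y:ℂ)*I)).re := by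
            apply mul_le_mul_of_nonneg_left hre (by positivity)
    linarith
  calc _ ≤ Real.exp (s.re * x + π/4 * |s.im|) * (M * Real.exp (-(Real.sqrt 2 * π * Real.exp x)))
        := mul_le_mul h1 h2 (norm_nonneg _) (Real.exp_nonneg _)
    _ = M * Real.exp (π/4 * |s.im|) * Real.exp (s.re * x - Real.sqrt 2 * π * Real.exp x) := by
        rw [Real.exp_add, show s.re * x - Real.sqrt 2 * π * Real.exp x
          = s.re * x + -(Real.sqrt 2 * π * Real.exp x) by ring, Real.exp_add, Real.exp_neg]
        ring

lemma lerch_integrable_bound (σ : ℝ) (hσ : 0 < σ) (C : ℝ) :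
    Integrable (fun x : ℝ => C * Real.exp (σ*x - Real.sqrt 2 * π * Real.exp x)) := by
  apply Integrable.const_mul
  have key : IntegrableOn (fun t : ℝ => t ^ (σ - 1) * Real.exp (-(Real.sqrt 2 * π) * t ^ (1:ℝ)))
      (Ioi 0) := integrableOn_rpow_mul_exp_neg_mul_rpow (by linarith) (by norm_num) (by positivity)
  have himg : Real.exp '' univ = Ioi 0 := by
    rw [image_univ, Real.range_exp]
  have hderiv : ∀ x ∈ (univ : Set ℝ), HasDerivWithinAt Real.exp (Real.exp x) univ x :=
    fun x _ => (Real.hasDerivAt_exp x).hasDerivWithinAt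
  have := (integrableOn_image_iff_integrableOn_abs_deriv_smul MeasurableSet.univ hderiv
    (Real.exp_injective.injOn)
    (fun t : ℝ => t ^ (σ - 1) * Real.exp (-(Real.sqrt 2 * π) * t ^ (1:ℝ)))).mp
  rw [himg] at this
  have h2 := this key
  rw [← integrableOn_univ]
  apply h2.congr_fun _ MeasurableSet.univ
  intro x _
  simp only [smul_eq_mul, Real.rpow_one]
  rw [abs_of_pos (Real.exp_pos x), Real.rpow_def_of_pos (Real.exp_pos x), Real.log_exp,
    ← Real.exp_add, ← Real.exp_add]
  congr 1
  ring



lemma lerchG_diff (a lam : ℝ) (hlam : lam ∈ Ioo (0:ℝ) 1) (s : ℂ) {w : ℂ}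
    (hw : w.im ∈ Icc (-(π/4)) 0) : DifferentiableAt ℂ (lerchG a lam s) w := by
  have hw' : Complex.exp w ∈ lerchS := by
    have := (lerch_exp_mem w.re w.im hw).1
    rwa [Complex.re_add_im w] at this
  have hden : Complex.exp (2 * (π : ℂ) * Complex.exp w - 2 * (π : ℂ) * I * (lam : ℂ)) - 1 ≠ 0 :=
    lerchD_ne_zero lam hlam hw'
  apply DifferentiableAt.mul
  · exact (differentiableAt_id.const_mul s).cexp
  · apply DifferentiableAt.div
    · exact ((differentiableAt_id.cexp.const_mul (2 * (π : ℂ) * (a : ℂ))).neg).cexp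
    · exact ((differentiableAt_id.cexp.const_mul (2 * (π : ℂ))).sub_const _).cexp.sub_const 1
    · exact hden

lemma lerch_tendsto_top (s : ℂ) :
    Tendsto (fun T : ℝ => Real.exp (s.re * T - Real.sqrt 2 * π * Real.exp T)) atTop (nhds 0) := by
  apply Real.tendsto_exp_atBot.comp
  have h1 : Tendsto (fun T : ℝ => T * (Real.sqrt 2 * π * (Real.exp T / T) - s.re))
      atTop atTop := by
    apply Tendsto.atTop_mul_atTop₀ tendsto_id
    apply tendsto_atTop_add_const_right
    apply Tendsto.const_mul_atTop (by positivity : (0:ℝ) < Real.sqrt 2 * π)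
    exact Real.tendsto_exp_div_pow_atTop 1 |>.congr (by simp)
  have h2 : Tendsto (fun T : ℝ => -(T * (Real.sqrt 2 * π * (Real.exp T / T) - s.re)))
      atTop atBot := tendsto_neg_atBot_iff.mpr h1
  apply h2.congr'
  filter_upwards [eventually_gt_atTop (0:ℝ)] with T hT
  field_simp
  ring

lemma lerch_tendsto_bot (s : ℂ) (hσ : 0 < s.re) :
    Tendsto (fun T : ℝ => Real.exp (s.re * (-T) - Real.sqrt 2 * π * Real.exp (-T)))
      atTop (nhds 0) := by
  have hb : Tendsto (fun T : ℝ => Real.exp (-(s.re * T))) atTop (nhds 0) := by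
    apply Real.tendsto_exp_atBot.comp
    exact (tendsto_neg_atBot_iff.mpr (tendsto_id.const_mul_atTop hσ))
  apply squeeze_zero (fun T => Real.exp_nonneg _) _ hb
  intro T
  apply Real.exp_le_exp.mpr
  have := Real.exp_nonneg (-T)
  have hsq : (0:ℝ) ≤ Real.sqrt 2 * π := by positivity
  nlinarith



lemma lerch_contour (a lam : ℝ) (ha : a ∈ Ioc (0:ℝ) 1) (hlam : lam ∈ Ioo (0:ℝ) 1)
    (s : ℂ) (hs : 0 < s.re) :
    ∫ x : ℝ, lerchG a lam s ((x:ℂ) + ((0:ℝ):ℂ)*I)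
      = ∫ x : ℝ, lerchG a lam s ((x:ℂ) + ((-(π/4):ℝ):ℂ)*I) := by
  obtain ⟨C, hC, hCb⟩ := lerchG_bound a lam ha hlam s
  set G := lerchG a lam s with hG
  have hpi4 : -(π/4) ≤ (0:ℝ) := by linarith [Real.pi_pos]
  -- integrability on horizontal lines
  have hint : ∀ y0 ∈ Icc (-(π/4)) (0:ℝ), Integrable (fun x : ℝ => G ((x:ℂ) + (y0:ℂ)*I)) := by
    intro y0 hy0
    have hcont : Continuous (fun x : ℝ => G ((x:ℂ) + (y0:ℂ)*I)) := by
      rw [continuous_iff_continuousAt]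
      intro x
      have hdiff : DifferentiableAt ℂ G ((x:ℂ) + (y0:ℂ)*I) := by
        apply lerchG_diff a lam hlam s
        simpa using hy0
      exact ContinuousAt.comp (f := fun x : ℝ => (x:ℂ) + (y0:ℂ)*I) (g := G)
        hdiff.continuousAt
        ((Complex.continuous_ofReal.add continuous_const).continuousAt)
    apply Integrable.mono' (lerch_integrable_bound s.re hs C) hcont.aestronglyMeasurable
    exact Filter.Eventually.of_forall fun x => hCb x y0 hy0
  -- the rectangle contour identity
  have hzero : ∀ T : ℝ,
      (∫ x in (-T)..T, G ((x:ℂ) + ((-(π/4):ℝ):ℂ) * I))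
        - (∫ x in (-T)..T, G ((x:ℂ) + ((0:ℝ):ℂ) * I))
        + I • (∫ y in (-(π/4))..(0:ℝ), G ((T:ℝ) + (y:ℂ) * I))
        - I • (∫ y in (-(π/4))..(0:ℝ), G (((-T:ℝ):ℂ) + (y:ℂ) * I)) = 0 := by
    intro T
    have hdiff : DifferentiableOn ℂ G ([[(-T:ℝ), T]] ×ℂ [[-(π/4), (0:ℝ)]]) := by
      intro u hu
      refine (lerchG_diff a lam hlam s ?_).differentiableWithinAt
      have := hu.2
      rwa [uIcc_of_le hpi4] at this
    have := Complex.integral_boundary_rect_eq_zero_of_differentiableOn G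
      (⟨-T, -(π/4)⟩ : ℂ) (⟨T, 0⟩ : ℂ) hdiff
    exact this
  -- vertical integrals tend to zero
  have hV1 : Tendsto (fun T : ℝ =>
      I • (∫ y in (-(π/4))..(0:ℝ), G ((T:ℝ) + (y:ℂ) * I))) atTop (nhds 0) := by
    have hb1 : Tendsto (fun T : ℝ => C * (π/4) * Real.exp (s.re * T - Real.sqrt 2 * π * Real.exp T))
        atTop (nhds 0) := by
      have := (lerch_tendsto_top s).const_mul (C * (π/4))
      simpa [mul_comm] using this
    apply squeeze_zero_norm _ hb1
    intro T
    rw [norm_smul, Complex.norm_I, one_mul]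
    calc ‖∫ y in (-(π/4))..(0:ℝ), G ((T:ℝ) + (y:ℂ) * I)‖
        ≤ C * Real.exp (s.re * T - Real.sqrt 2 * π * Real.exp T) * |0 - (-(π/4))| := by
          apply intervalIntegral.norm_integral_le_of_norm_le_const
          intro y hy
          rw [uIoc_of_le hpi4] at hy
          exact hCb T y ⟨hy.1.le, hy.2⟩
      _ = C * (π/4) * Real.exp (s.re * T - Real.sqrt 2 * π * Real.exp T) := by
          rw [abs_of_nonneg (by linarith)]
          ring
  have hV2 : Tendsto (fun T : ℝ =>
      I • (∫ y in (-(π/4))..(0:ℝ), G (((-T:ℝ):ℂ) + (y:ℂ) * I))) atTop (nhds 0) := by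
    have hb2 : Tendsto (fun T : ℝ =>
        C * (π/4) * Real.exp (s.re * (-T) - Real.sqrt 2 * π * Real.exp (-T))) atTop (nhds 0) := by
      have := (lerch_tendsto_bot s hs).const_mul (C * (π/4))
      simpa [mul_comm] using this
    apply squeeze_zero_norm _ hb2
    intro T
    rw [norm_smul, Complex.norm_I, one_mul]
    calc ‖∫ y in (-(π/4))..(0:ℝ), G (((-T:ℝ):ℂ) + (y:ℂ) * I)‖
        ≤ C * Real.exp (s.re * (-T) - Real.sqrt 2 * π * Real.exp (-T)) * |0 - (-(π/4))| := by
          apply intervalIntegral.norm_integral_le_of_norm_le_const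
          intro y hy
          rw [uIoc_of_le hpi4] at hy
          exact hCb (-T) y ⟨hy.1.le, hy.2⟩
      _ = C * (π/4) * Real.exp (s.re * (-T) - Real.sqrt 2 * π * Real.exp (-T)) := by
          rw [abs_of_nonneg (by linarith)]
          ring
  -- horizontal integrals converge
  have hH1 : Tendsto (fun T : ℝ => ∫ x in (-T)..T, G ((x:ℂ) + ((-(π/4):ℝ):ℂ) * I)) atTop
      (nhds (∫ x : ℝ, G ((x:ℂ) + ((-(π/4):ℝ):ℂ)*I))) := by
    apply intervalIntegral_tendsto_integral (hint _ ⟨le_refl _, hpi4⟩)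
      tendsto_neg_atTop_atBot tendsto_id
  have hH2 : Tendsto (fun T : ℝ => ∫ x in (-T)..T, G ((x:ℂ) + ((0:ℝ):ℂ) * I)) atTop
      (nhds (∫ x : ℝ, G ((x:ℂ) + ((0:ℝ):ℂ)*I))) := by
    apply intervalIntegral_tendsto_integral (hint _ ⟨hpi4, le_refl _⟩)
      tendsto_neg_atTop_atBot tendsto_id
  have hcomb := ((hH1.sub hH2).add hV1).sub hV2
  have h0 : Tendsto (fun T : ℝ =>
      (∫ x in (-T)..T, G ((x:ℂ) + ((-(π/4):ℝ):ℂ) * I))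
        - (∫ x in (-T)..T, G ((x:ℂ) + ((0:ℝ):ℂ) * I))
        + I • (∫ y in (-(π/4))..(0:ℝ), G ((T:ℝ) + (y:ℂ) * I))
        - I • (∫ y in (-(π/4))..(0:ℝ), G (((-T:ℝ):ℂ) + (y:ℂ) * I))) atTop (nhds 0) :=
    Tendsto.congr (fun T => (hzero T).symm) tendsto_const_nhds
  have heq : (∫ x : ℝ, G ((x:ℂ) + ((-(π/4):ℝ):ℂ)*I)) - (∫ x : ℝ, G ((x:ℂ) + ((0:ℝ):ℂ)*I))
      + 0 - 0 = 0 := tendsto_nhds_unique hcomb h0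
  have : (∫ x : ℝ, G ((x:ℂ) + ((-(π/4):ℝ):ℂ)*I)) = (∫ x : ℝ, G ((x:ℂ) + ((0:ℝ):ℂ)*I)) := by
    have := heq
    rw [add_zero, sub_zero, sub_eq_zero] at this
    exact this
  exact this.symm



lemma lerch_cov (F : ℂ → ℂ) :
    ∫ z in Ioi (0:ℝ), F ((z:ℝ):ℂ) = ∫ x : ℝ, Real.exp x • F (((Real.exp x : ℝ)):ℂ) := by
  have himg : Real.exp '' univ = Ioi 0 := by rw [image_univ, Real.range_exp]
  have hderiv : ∀ x ∈ (univ : Set ℝ), HasDerivWithinAt Real.exp (Real.exp x) univ x :=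
    fun x _ => (Real.hasDerivAt_exp x).hasDerivWithinAt
  rw [← himg, integral_image_eq_integral_abs_deriv_smul MeasurableSet.univ hderiv
    Real.exp_injective.injOn (fun t : ℝ => F ((t:ℝ):ℂ))]
  rw [MeasureTheory.setIntegral_univ]
  apply MeasureTheory.integral_congr_ae
  filter_upwards with x
  rw [abs_of_pos (Real.exp_pos x)]

lemma lerch_cpow_exp (s : ℂ) (x : ℝ) :
    ((Real.exp x : ℝ) : ℂ) ^ (s-1) = Complex.exp ((x:ℂ) * (s-1)) := by
  rw [Complex.ofReal_exp, Complex.cpow_def_of_ne_zero (Complex.exp_ne_zero _),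
    Complex.log_exp (by simpa using Real.pi_pos) (by simp [Real.pi_nonneg])]

theorem lerch_integral_contour_rotation' (a lam : ℝ) (ha : a ∈ Ioc (0:ℝ) 1)
    (hlam : lam ∈ Ioo (0:ℝ) 1) (s : ℂ) (hs : 0 < s.re) :
    (∫ z in Ioi (0 : ℝ),
        (z : ℂ) ^ (s - 1) * Complex.exp (-(2 * (π : ℂ) * (a : ℂ) * (z : ℂ))) /
          (Complex.exp (2 * (π : ℂ) * (z : ℂ) - 2 * (π : ℂ) * I * (lam : ℂ)) - 1))
      = Complex.exp (-(I * (π : ℂ) * s / 4)) *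
          ∫ u in Ioi (0 : ℝ),
            (u : ℂ) ^ (s - 1) *
              Complex.exp (-(2 * (π : ℂ) * (a : ℂ) * Complex.exp (-(I * (π : ℂ) / 4)) * (u : ℂ))) /
              (Complex.exp (2 * (π : ℂ) * Complex.exp (-(I * (π : ℂ) / 4)) * (u : ℂ)
                  - 2 * (π : ℂ) * I * (lam : ℂ)) - 1) := by
  have hE : ∀ x : ℝ, Complex.exp (-(I * (π:ℂ) / 4)) * ((Real.exp x : ℝ) : ℂ)
      = Complex.exp ((x:ℂ) + ((-(π/4):ℝ):ℂ)*I) := by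
    intro x
    rw [Complex.ofReal_exp, ← Complex.exp_add]
    congr 1
    push_cast
    ring
  -- left-hand side
  have h1 : (∫ z in Ioi (0 : ℝ),
      (z : ℂ) ^ (s - 1) * Complex.exp (-(2 * (π : ℂ) * (a : ℂ) * (z : ℂ))) /
        (Complex.exp (2 * (π : ℂ) * (z : ℂ) - 2 * (π : ℂ) * I * (lam : ℂ)) - 1))
      = ∫ x : ℝ, lerchG a lam s ((x:ℂ) + ((0:ℝ):ℂ)*I) := by
    have hA : (∫ z in Ioi (0 : ℝ),
        (z : ℂ) ^ (s - 1) * Complex.exp (-(2 * (π : ℂ) * (a : ℂ) * (z : ℂ))) /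
          (Complex.exp (2 * (π : ℂ) * (z : ℂ) - 2 * (π : ℂ) * I * (lam : ℂ)) - 1))
      = ∫ x : ℝ, Real.exp x • (((Real.exp x : ℝ) : ℂ) ^ (s - 1)
          * Complex.exp (-(2 * (π : ℂ) * (a : ℂ) * ((Real.exp x : ℝ) : ℂ))) /
          (Complex.exp (2 * (π : ℂ) * ((Real.exp x : ℝ) : ℂ)
            - 2 * (π : ℂ) * I * (lam : ℂ)) - 1)) :=
      lerch_cov (fun w : ℂ => w ^ (s - 1) * Complex.exp (-(2 * (π : ℂ) * (a : ℂ) * w)) /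
          (Complex.exp (2 * (π : ℂ) * w - 2 * (π : ℂ) * I * (lam : ℂ)) - 1))
    rw [hA]
    apply MeasureTheory.integral_congr_ae
    filter_upwards with x
    show _ = _
    rw [lerch_cpow_exp s x, Complex.real_smul, Complex.ofReal_exp, lerchG]
    simp only [Complex.ofReal_zero, zero_mul, add_zero]
    rw [mul_div_assoc, ← mul_assoc, ← Complex.exp_add,
      show (x:ℂ) + (x:ℂ) * (s-1) = s * (x:ℂ) by ring]
  -- right-hand side
  have h2 : (∫ u in Ioi (0 : ℝ),
      (u : ℂ) ^ (s - 1) *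
        Complex.exp (-(2 * (π : ℂ) * (a : ℂ) * Complex.exp (-(I * (π : ℂ) / 4)) * (u : ℂ))) /
        (Complex.exp (2 * (π : ℂ) * Complex.exp (-(I * (π : ℂ) / 4)) * (u : ℂ)
            - 2 * (π : ℂ) * I * (lam : ℂ)) - 1))
      = Complex.exp (I * (π : ℂ) * s / 4) *
          ∫ x : ℝ, lerchG a lam s ((x:ℂ) + ((-(π/4):ℝ):ℂ)*I) := by
    have hB : (∫ u in Ioi (0 : ℝ),
        (u : ℂ) ^ (s - 1) *
          Complex.exp (-(2 * (π : ℂ) * (a : ℂ) * Complex.exp (-(I * (π : ℂ) / 4)) * (u : ℂ))) /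
          (Complex.exp (2 * (π : ℂ) * Complex.exp (-(I * (π : ℂ) / 4)) * (u : ℂ)
              - 2 * (π : ℂ) * I * (lam : ℂ)) - 1))
      = ∫ x : ℝ, Real.exp x • (((Real.exp x : ℝ) : ℂ) ^ (s - 1) *
          Complex.exp (-(2 * (π : ℂ) * (a : ℂ) * Complex.exp (-(I * (π : ℂ) / 4))
            * ((Real.exp x : ℝ) : ℂ))) /
          (Complex.exp (2 * (π : ℂ) * Complex.exp (-(I * (π : ℂ) / 4)) * ((Real.exp x : ℝ) : ℂ)
              - 2 * (π : ℂ) * I * (lam : ℂ)) - 1)) :=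
      lerch_cov (fun w : ℂ => w ^ (s - 1) *
          Complex.exp (-(2 * (π : ℂ) * (a : ℂ) * Complex.exp (-(I * (π : ℂ) / 4)) * w)) /
          (Complex.exp (2 * (π : ℂ) * Complex.exp (-(I * (π : ℂ) / 4)) * w
              - 2 * (π : ℂ) * I * (lam : ℂ)) - 1))
    rw [hB, ← MeasureTheory.integral_const_mul]
    apply MeasureTheory.integral_congr_ae
    filter_upwards with x
    show _ = _
    rw [lerch_cpow_exp s x, Complex.real_smul, Complex.ofReal_exp,
      show 2 * (π : ℂ) * (a : ℂ) * Complex.exp (-(I * (π : ℂ) / 4)) * Complex.exp ((x:ℂ))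
        = 2 * (π : ℂ) * (a : ℂ) * (Complex.exp (-(I * (π : ℂ) / 4)) * Complex.exp ((x:ℂ)))
        by ring,
      show 2 * (π : ℂ) * Complex.exp (-(I * (π : ℂ) / 4)) * Complex.exp ((x:ℂ))
        = 2 * (π : ℂ) * (Complex.exp (-(I * (π : ℂ) / 4)) * Complex.exp ((x:ℂ))) by ring]
    have := hE x
    rw [Complex.ofReal_exp] at this
    rw [this, lerchG]
    rw [mul_div_assoc, ← mul_assoc, ← Complex.exp_add, mul_div_assoc, ← mul_assoc,
      ← Complex.exp_add]
    congr 2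
    push_cast
    ring
  rw [h1, h2, lerch_contour a lam ha hlam s hs, ← mul_assoc, ← Complex.exp_add]
  rw [show -(I * (π : ℂ) * s / 4) + I * (π : ℂ) * s / 4 = 0 by ring, Complex.exp_zero, one_mul]


end

end LerchAuxiliary

/-- **Rotation of the contour of integration** from the positive real axis to the
ray `(0, ∞ e^{-iπ/4})` for the Lerch-type integrand, valid for `a ∈ (0,1]`,
`λ ∈ (0,1)` and `Re s > 0`. -/
theorem lerch_integral_contour_rotation (a lam : ℝ) (ha : a ∈ Ioc (0:ℝ) 1)
    (hlam : lam ∈ Ioo (0:ℝ) 1) (s : ℂ) (hs : 0 < s.re) :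
    (∫ z in Ioi (0 : ℝ),
        (z : ℂ) ^ (s - 1) * Complex.exp (-(2 * (π : ℂ) * (a : ℂ) * (z : ℂ))) /
          (Complex.exp (2 * (π : ℂ) * (z : ℂ) - 2 * (π : ℂ) * I * (lam : ℂ)) - 1))
      = Complex.exp (-(I * (π : ℂ) * s / 4)) *
          ∫ u in Ioi (0 : ℝ),
            (u : ℂ) ^ (s - 1) *
              Complex.exp (-(2 * (π : ℂ) * (a : ℂ) * Complex.exp (-(I * (π : ℂ) / 4)) * (u : ℂ))) /
              (Complex.exp (2 * (π : ℂ) * Complex.exp (-(I * (π : ℂ) / 4)) * (u : ℂ)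
                  - 2 * (π : ℂ) * I * (lam : ℂ)) - 1) := by
  exact lerch_integral_contour_rotation' a lam ha hlam s hs
end

section
/- Let a ∈ {0, 1} and let s ∈ ℂ with 0 < Re(s) < 1. Then 2^s e^{iπs/2} Γ((s+a)/2) / Γ(s) = π^{-1/2} · i^a · (1 + (−1)^a e^{iπs}) · Γ((1−s+a)/2). -/
open Real
open Complex (I)

/-- **Siegel's Gamma-factor identity** for Dirichlet `L`-functions: for `a ∈ {0,1}`
and `0 < Re s < 1`,
`2^s e^{iπs/2} Γ((s+a)/2) / Γ(s) = π^{-1/2} i^a (1 + (-1)^a e^{iπs}) Γ((1-s+a)/2)`. -/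
theorem siegel_gamma_factor_identity (a : ℕ) (ha : a = 0 ∨ a = 1) (s : ℂ)
    (hs0 : 0 < s.re) (hs1 : s.re < 1) :
    (2 : ℂ) ^ s * Complex.exp (I * (π : ℂ) * s / 2) * Complex.Gamma ((s + (a : ℂ)) / 2)
        / Complex.Gamma s
      = (π : ℂ) ^ (-(1/2) : ℂ) * I ^ a
          * (1 + (-1 : ℂ) ^ a * Complex.exp (I * (π : ℂ) * s))
          * Complex.Gamma ((1 - s + (a : ℂ)) / 2) := by
  have hπ : (π:ℂ) ≠ 0 := Complex.ofReal_ne_zero.mpr Real.pi_ne_zero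
  have hsq0 : ((Real.sqrt π : ℝ) : ℂ) ≠ 0 :=
    Complex.ofReal_ne_zero.mpr (Real.sqrt_ne_zero'.mpr Real.pi_pos)
  have hQ : ((Real.sqrt π : ℝ) : ℂ) * ((Real.sqrt π : ℝ) : ℂ) = (π:ℂ) := by
    rw [← Complex.ofReal_mul, Real.mul_self_sqrt Real.pi_pos.le]
  have hπhalf : (π:ℂ) ^ (-(1/2) : ℂ) = (((Real.sqrt π : ℝ)):ℂ)⁻¹ := by
    rw [show (-(1/2) : ℂ) = ((-(1/2) : ℝ) : ℂ) by norm_num,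
      ← Complex.ofReal_cpow Real.pi_pos.le, Real.rpow_neg Real.pi_pos.le]
    norm_num [Real.sqrt_eq_rpow]
  have h2 : (2:ℂ) ^ s * (2:ℂ) ^ (1 - s) = 2 := by
    rw [← Complex.cpow_add _ _ two_ne_zero]; simp
  have hΓs : Complex.Gamma s ≠ 0 := Complex.Gamma_ne_zero_of_re_pos hs0
  have hΓh : Complex.Gamma (s/2) ≠ 0 := by
    refine Complex.Gamma_ne_zero_of_re_pos ?_
    rw [show (2:ℂ) = ((2:ℝ):ℂ) by norm_num, Complex.div_ofReal_re]
    linarith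
  have hΓp : Complex.Gamma ((s+1)/2) ≠ 0 := by
    refine Complex.Gamma_ne_zero_of_re_pos ?_
    rw [show (2:ℂ) = ((2:ℝ):ℂ) by norm_num, Complex.div_ofReal_re, Complex.add_re,
      Complex.one_re]
    linarith
  have hdup := Complex.Gamma_mul_Gamma_add_half (s/2)
  rw [show s/2 + 1/2 = (s+1)/2 by ring, show (2:ℂ)*(s/2) = s by ring] at hdup
  rcases ha with rfl | rfl
  · rw [hπhalf]
    simp only [Nat.cast_zero, pow_zero, add_zero, one_mul, mul_one]
    have hΓm : Complex.Gamma ((1-s)/2) ≠ 0 := by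
      refine Complex.Gamma_ne_zero_of_re_pos ?_
      rw [show (2:ℂ) = ((2:ℝ):ℂ) by norm_num, Complex.div_ofReal_re, Complex.sub_re,
        Complex.one_re]
      linarith
    have hrefl := Complex.Gamma_mul_Gamma_one_sub ((s+1)/2)
    rw [show (1:ℂ) - (s+1)/2 = (1-s)/2 by ring,
      show (π:ℂ) * ((s+1)/2) = π * (s+1) / 2 by ring] at hrefl
    have hsin : Complex.sin (π * (s+1) / 2) ≠ 0 := by
      intro h
      rw [h, div_zero] at hrefl
      exact mul_ne_zero hΓp hΓm hrefl
    have key : 2 * Complex.exp (I * π * s / 2) * Complex.sin (π * (s+1) / 2)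
        = 1 + Complex.exp (I * π * s) := by
      rw [Complex.sin]
      have e1 : Complex.exp (I * π * s / 2) * Complex.exp (-(π * (s+1) / 2) * I) = -I := by
        rw [← Complex.exp_add, show I * ↑π * s / 2 + -(↑π * (s+1) / 2) * I = (-(π/2):ℝ) * I by
          push_cast; ring, Complex.exp_mul_I]
        push_cast; simp
      have e2 : Complex.exp (I * π * s / 2) * Complex.exp ((π * (s+1) / 2) * I)
          = Complex.exp (I * π * s) * I := by
        rw [← Complex.exp_add, show I * ↑π * s / 2 + (↑π * (s+1) / 2) * I
          = I * π * s + ((π/2:ℝ)) * I by push_cast; ring, Complex.exp_add, Complex.exp_mul_I]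
        push_cast; simp
      calc 2 * Complex.exp (I * π * s / 2) *
          ((Complex.exp (-(π * (s+1) / 2) * I) - Complex.exp ((π * (s+1) / 2) * I)) * I / 2)
          = (Complex.exp (I * π * s / 2) * Complex.exp (-(π * (s+1) / 2) * I)
            - Complex.exp (I * π * s / 2) * Complex.exp ((π * (s+1) / 2) * I)) * I := by ring
        _ = 1 + Complex.exp (I * π * s) := by
            rw [e1, e2]; ring_nf; rw [Complex.I_sq]; ring
    have hA : Complex.Gamma (s/2)
        = Complex.Gamma s * (2:ℂ)^(1-s) * ((Real.sqrt π : ℝ):ℂ) / Complex.Gamma ((s+1)/2) :=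
      (eq_div_iff hΓp).mpr hdup
    have hM : Complex.Gamma ((1-s)/2)
        = (π:ℂ) / Complex.sin (π * (s+1) / 2) / Complex.Gamma ((s+1)/2) := by
      rw [eq_div_iff hΓp, mul_comm]; exact hrefl
    rw [hA, hM, ← key]
    field_simp
    linear_combination (((Real.sqrt π : ℝ):ℂ) *
        ((Real.sqrt π : ℝ):ℂ)) * h2
      + 2 * hQ
  · rw [hπhalf]
    simp only [Nat.cast_one, pow_one]
    rw [show (1:ℂ) - s + 1 = 2 - s by ring, show (-1:ℂ) * Complex.exp (I * π * s)
      = -Complex.exp (I * π * s) by ring, ← sub_eq_add_neg]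
    have hΓm : Complex.Gamma ((2-s)/2) ≠ 0 := by
      refine Complex.Gamma_ne_zero_of_re_pos ?_
      rw [show (2:ℂ) = ((2:ℝ):ℂ) by norm_num, Complex.div_ofReal_re, Complex.sub_re]
      norm_num
      linarith
    have hrefl := Complex.Gamma_mul_Gamma_one_sub (s/2)
    rw [show (1:ℂ) - s/2 = (2-s)/2 by ring,
      show (π:ℂ) * (s/2) = π * s / 2 by ring] at hrefl
    have hsin : Complex.sin (π * s / 2) ≠ 0 := by
      intro h
      rw [h, div_zero] at hrefl
      exact mul_ne_zero hΓh hΓm hrefl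
    have key : 2 * Complex.exp (I * π * s / 2) * Complex.sin (π * s / 2)
        = I * (1 - Complex.exp (I * π * s)) := by
      rw [Complex.sin]
      have e1 : Complex.exp (I * π * s / 2) * Complex.exp (-(π * s / 2) * I) = 1 := by
        rw [← Complex.exp_add, show I * ↑π * s / 2 + -(↑π * s / 2) * I = 0 by ring,
          Complex.exp_zero]
      have e2 : Complex.exp (I * π * s / 2) * Complex.exp ((π * s / 2) * I)
          = Complex.exp (I * π * s) := by
        rw [← Complex.exp_add]; congr 1; ring
      calc 2 * Complex.exp (I * π * s / 2) *
          ((Complex.exp (-(π * s / 2) * I) - Complex.exp ((π * s / 2) * I)) * I / 2)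
          = (Complex.exp (I * π * s / 2) * Complex.exp (-(π * s / 2) * I)
            - Complex.exp (I * π * s / 2) * Complex.exp ((π * s / 2) * I)) * I := by ring
        _ = I * (1 - Complex.exp (I * π * s)) := by rw [e1, e2]; ring
    have hB : Complex.Gamma ((s+1)/2)
        = Complex.Gamma s * (2:ℂ)^(1-s) * ((Real.sqrt π : ℝ):ℂ) / Complex.Gamma (s/2) := by
      rw [eq_div_iff hΓh, mul_comm]; exact hdup
    have hM : Complex.Gamma ((2-s)/2)
        = (π:ℂ) / Complex.sin (π * s / 2) / Complex.Gamma (s/2) := by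
      rw [eq_div_iff hΓh, mul_comm]; exact hrefl
    rw [hB, hM]
    field_simp
    linear_combination (Complex.exp (I * π * s / 2) *
        Complex.sin (π * s / 2) * ((Real.sqrt π : ℝ):ℂ) *
        ((Real.sqrt π : ℝ):ℂ)) * h2
      + (2 * Complex.exp (I * π * s / 2) *
        Complex.sin (π * s / 2)) * hQ
      + ((π:ℂ)) * key
end
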